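/- Let X be a finite type, Y a finite type, and let D ≤ N be positive integers. Let Perm(Y) denote the set of bijections of Y. Suppose Ŝ is a finite set of partial functions ŝ : X ⇀ Y^D × Y^{N−D} and (c_ŝ)_{ŝ∈Ŝ} are real numbers, and for O : X → Y^D and a tuple O' = (O_D, …, O_{N−1}) of bijections of Y define P(O, O') := Σ_{ŝ∈Ŝ} c_ŝ · I_ŝ(x ↦ (O(x), (O_D(x), …, O_{N−1}(x)))). Then there exist a finite set S of partial functions s : X ⇀ Y^D with max_{s∈S} |dom(s)| ≤ max_{ŝ∈Ŝ} |dom(ŝ)| and real numbers (c'_s)_{s∈S} such that for every O : X → Y^D, the average of P(O, O') over O' drawn uniformly from Perm(Y)^{N−D} equals Σ_{s∈S} c'_s · I_s(O). -/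
import Mathlib


open scoped BigOperators

noncomputable section

open Classical in
/-- The indicator `I_s(f)`: equals `1` if the total function `f` extends the partial
function `s` (encoded as `X → Option W`), and `0` otherwise. -/
def extendsIndicator {X W : Type*} (s : X → Option W) (f : X → W) : ℝ :=
  if ∀ x w, s x = some w → f x = w then 1 else 0

/-- The size of the domain of a partial function `s : X ⇀ W`. -/
def domCard {X W : Type*} [Fintype X] (s : X → Option W) : ℕ :=
  (Finset.univ.filter fun x => (s x).isSome).card

open Classical in
lemma extendsIndicator_prod {X W1 W2 : Type*} (s : X → Option (W1 × W2))
    (f : X → W1) (g : X → W2) :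
    extendsIndicator s (fun x => (f x, g x)) =
      extendsIndicator (fun x => (s x).map Prod.fst) f *
      extendsIndicator (fun x => (s x).map Prod.snd) g := by
  unfold extendsIndicator
  by_cases h : ∀ x w, s x = some w → (f x, g x) = w
  · rw [if_pos h, if_pos, if_pos]
    · ring
    · intro x w hw
      obtain ⟨v, hv, rfl⟩ := Option.map_eq_some_iff.mp hw
      exact congrArg Prod.snd (h x v hv)
    · intro x w hw
      obtain ⟨v, hv, rfl⟩ := Option.map_eq_some_iff.mp hw
      exact congrArg Prod.fst (h x v hv)
  · rw [if_neg h]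
    push_neg at h
    obtain ⟨x, w, hw, hne⟩ := h
    by_cases h1 : f x = w.1
    · have h2 : g x ≠ w.2 := fun h2 => hne (Prod.ext h1 h2)
      have hg : ¬ ∀ (x : X) (w2 : W2) (w1 : W1), s x = some (w1, w2) → g x = w2 :=
        fun hall => h2 (hall x w.2 w.1 (by simp [hw]))
      simp [hg]
    · have hf : ¬ ∀ (x : X) (w1 : W1) (w2 : W2), s x = some (w1, w2) → f x = w1 :=
        fun hall => h1 (hall x w.1 w.2 (by simp [hw]))
      simp [hf]

/-- **Averaging out the redundant padded oracles.**
Let `D ≤ N`, let `Ŝ` be a finite set of partial functions `ŝ : X ⇀ Y^D × Y^{N−D}` with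
real coefficients `c_ŝ`, and for `O : X → Y^D` and a tuple `O'` of `N − D` bijections
(`Perm`s) let `P(O, O') := Σ_{ŝ ∈ Ŝ} c_ŝ · I_ŝ(x ↦ (O(x), (O_D(x), …, O_{N−1}(x))))`.
Then there are a finite set `S` of partial functions `s : X ⇀ Y^D` with
`max_{s ∈ S} |dom s| ≤ max_{ŝ ∈ Ŝ} |dom ŝ|` and reals `c'_s` such that for every
`O : X → Y^D`, the average of `P(O, O')` over uniformly random `O'` equals
`Σ_{s ∈ S} c'_s · I_s(O)`. -/
theorem average_out_redundant_oracles {X Y : Type*}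
    [Fintype X] [Fintype Y] [DecidableEq X] [DecidableEq Y]
    (D N : ℕ) (hD : 0 < D) (hDN : D ≤ N)
    (Shat : Finset (X → Option ((Fin D → Y) × (Fin (N - D) → Y))))
    (c : (X → Option ((Fin D → Y) × (Fin (N - D) → Y))) → ℝ) :
    ∃ (S : Finset (X → Option (Fin D → Y))) (c' : (X → Option (Fin D → Y)) → ℝ),
      (∀ s ∈ S, domCard s ≤ Shat.sup domCard) ∧
      ∀ O : X → Fin D → Y,
        (∑ O' : Fin (N - D) → (X ≃ Y),
            ∑ shat ∈ Shat, c shat *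
              extendsIndicator shat (fun x => (O x, fun j => (O' j) x))) /
          (Fintype.card (Fin (N - D) → (X ≃ Y)) : ℝ) =
        ∑ s ∈ S, c' s * extendsIndicator s O := by
  classical
  set p1 : (X → Option ((Fin D → Y) × (Fin (N - D) → Y))) → (X → Option (Fin D → Y)) :=
    fun shat x => (shat x).map Prod.fst with hp1
  set K : (X → Option ((Fin D → Y) × (Fin (N - D) → Y))) → ℝ := fun shat =>
    (∑ O' : Fin (N - D) → (X ≃ Y),
      extendsIndicator (fun x => (shat x).map Prod.snd) (fun x j => (O' j) x)) /
      (Fintype.card (Fin (N - D) → (X ≃ Y)) : ℝ) with hK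
  refine ⟨Shat.image p1,
    fun s => ∑ shat ∈ Shat.filter (fun t => p1 t = s), c shat * K shat, ?_, ?_⟩
  · intro s hs
    obtain ⟨shat, hmem, rfl⟩ := Finset.mem_image.mp hs
    have hdom : domCard (p1 shat) = domCard shat := by
      unfold domCard
      congr 1
      apply Finset.filter_congr
      intro x _
      simp [p1]
    rw [hdom]
    exact Finset.le_sup hmem
  · intro O
    have step1 : (∑ O' : Fin (N - D) → (X ≃ Y),
        ∑ shat ∈ Shat, c shat *
          extendsIndicator shat (fun x => (O x, fun j => (O' j) x))) =
        ∑ shat ∈ Shat, c shat * extendsIndicator (p1 shat) O *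
          (∑ O' : Fin (N - D) → (X ≃ Y),
            extendsIndicator (fun x => (shat x).map Prod.snd) (fun x j => (O' j) x)) := by
      rw [Finset.sum_comm]
      refine Finset.sum_congr rfl fun shat _ => ?_
      rw [Finset.mul_sum]
      refine Finset.sum_congr rfl fun O' _ => ?_
      rw [extendsIndicator_prod]
      ring
    rw [step1, Finset.sum_div]
    have step2 : ∀ shat ∈ Shat,
        c shat * extendsIndicator (p1 shat) O *
          (∑ O' : Fin (N - D) → (X ≃ Y),
            extendsIndicator (fun x => (shat x).map Prod.snd) (fun x j => (O' j) x)) /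
          (Fintype.card (Fin (N - D) → (X ≃ Y)) : ℝ) =
        c shat * K shat * extendsIndicator (p1 shat) O := by
      intro shat _
      rw [hK]
      ring
    rw [Finset.sum_congr rfl step2]
    rw [← Finset.sum_fiberwise_of_maps_to (g := p1) (t := Shat.image p1)
      (fun x hx => Finset.mem_image_of_mem p1 hx)
      (fun shat => c shat * K shat * extendsIndicator (p1 shat) O)]
    refine Finset.sum_congr rfl fun s _ => ?_
    rw [Finset.sum_mul]
    refine Finset.sum_congr rfl fun shat hshat => ?_
    rw [(Finset.mem_filter.mp hshat).2]
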